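/- Let E be the elliptic curve over ℂ with affine Weierstrass equation y² = x³ + x, and let ι : E(ℂ) → E(ℂ) be the map sending the point at infinity O to O and an affine point (x, y) to (−x, i·y). Let P = (x, y) be an affine point of E(ℂ) such that 2•P − ι(P) is again an affine point (x′, y′). Then 5x² + 1 − 2i ≠ 0 and x′ = (3 + 4i)·x·(x² + 1 + 2i)² / (5x² + 1 − 2i)². In other words, the x-coordinate map semiconjugates the isogeny [2−i] to the Lattès map ψ(x) = (3+4i)x(x²+1+2i)²/(5x²+1−2i)² on ℙ¹. -/

import Mathlib

/-!
Write `2•P - ι(P) = 2•P + S` with `S = (-x, -iy)`. If `y = 0` then `2•P = O`, so `x' = -x`.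
Otherwise `2•P = (x₂, y₂)` with `4y²x₂ = (x² - 1)²`, and the chord formula
`x(R + S) (x_R - x_S)² = (x_R + x_S)(x_R x_S + 1) - 2 y_R y_S` on `y² = x³ + x` involves `y` only
through `y²` and `y y₂`, so `x'` is a rational function of `x` with denominator
`4y²(x₂ + x) = 5x⁴ + 2x² + 1 = (5x² + 1 - 2i)(5x² + 1 + 2i)/5`. In the remaining case `x₂ = -x`,
the sum is affine only if `2•P = S`; comparing `y`-coordinates then gives `5x² + 1 + 2i = 0`,
and `x' = x(2•S) = x`.
-/

open Complex

/-- The elliptic curve `y² = x³ + x` over `ℂ`. -/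
noncomputable def Ecurve : WeierstrassCurve.Affine ℂ :=
  { a₁ := 0, a₂ := 0, a₃ := 0, a₄ := 1, a₆ := 0 }

lemma Ecurve_nonsingular_neg_I_mul {x y : ℂ} (h : Ecurve.Nonsingular x y) :
    Ecurve.Nonsingular (-x) (Complex.I * y) := by
  rw [WeierstrassCurve.Affine.nonsingular_iff, WeierstrassCurve.Affine.equation_iff] at h ⊢
  obtain ⟨h1, h2⟩ := h
  simp only [Ecurve] at h1 h2 ⊢
  constructor
  · linear_combination y ^ 2 * Complex.I_sq - h1
  · rcases h2 with h2 | h2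
    · left
      intro hc
      exact h2 (by linear_combination hc)
    · right
      have hy : y ≠ 0 := fun hy0 => h2 (by rw [hy0]; ring)
      intro hc
      have h2I : (2 * Complex.I : ℂ) ≠ 0 := by simp [Complex.I_ne_zero]
      have hzero : (2 * Complex.I) * y = 0 := by linear_combination hc
      rcases mul_eq_zero.mp hzero with h0 | h0
      · exact h2I h0
      · exact hy h0

/-- Complex multiplication by `i` on `E(ℂ)`: `O ↦ O`, `(x, y) ↦ (-x, i·y)`. -/
noncomputable def iotaE : Ecurve.Point → Ecurve.Point
  | .zero => .zero
  | .some _ _ h => .some _ _ (Ecurve_nonsingular_neg_I_mul h)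

namespace WeierstrassCurve.Affine

variable {F : Type*} [Field F] {W : Affine F}

namespace Point

variable [DecidableEq F]

lemma Y_eq_of_some_add_some_eq_some {x₁ y₁ x₂ y₂ x₃ y₃ : F} {h₁ : W.Nonsingular x₁ y₁}
    {h₂ : W.Nonsingular x₂ y₂} {h₃ : W.Nonsingular x₃ y₃}
    (hsum : some x₁ y₁ h₁ + some x₂ y₂ h₂ = some x₃ y₃ h₃) (hx : x₁ = x₂) : y₁ = y₂ :=
  Y_eq_of_Y_ne h₁.1 h₂.1 hx fun hy => some_ne_zero h₃ (by rw [← hsum, add_of_Y_eq hx hy])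

lemma Y_ne_negY_of_some_add_self_eq_some {x y x₂ y₂ : F} {h : W.Nonsingular x y}
    {h₂ : W.Nonsingular x₂ y₂} (hsum : some x y h + some x y h = some x₂ y₂ h₂) :
    y ≠ W.negY x y := fun hy => some_ne_zero h₂ (by rw [← hsum, add_self_of_Y_eq hy])

end Point

variable [W.IsShortNF]

lemma negY_of_isShortNF (x y : F) : W.negY x y = -y := by
  simp [negY]

lemma equation_iff_of_isShortNF (x y : F) :
    W.Equation x y ↔ y ^ 2 = x ^ 3 + W.a₄ * x + W.a₆ := by
  simp [equation_iff]

namespace Point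

variable [DecidableEq F]

lemma X_of_some_add_some_eq_some {x₁ y₁ x₂ y₂ x₃ y₃ : F} {h₁ : W.Nonsingular x₁ y₁}
    {h₂ : W.Nonsingular x₂ y₂} {h₃ : W.Nonsingular x₃ y₃}
    (hsum : some x₁ y₁ h₁ + some x₂ y₂ h₂ = some x₃ y₃ h₃) (hx : x₁ ≠ x₂) :
    x₃ * (x₁ - x₂) ^ 2 = (x₁ + x₂) * (x₁ * x₂ + W.a₄) + 2 * W.a₆ - 2 * y₁ * y₂ := by
  rw [add_of_X_ne hx, some.injEq] at hsum
  rw [← hsum.1, addX, slope_of_X_ne hx, a₁_of_isShortNF, a₂_of_isShortNF]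
  have e₁ := (equation_iff_of_isShortNF x₁ y₁).mp h₁.1
  have e₂ := (equation_iff_of_isShortNF x₂ y₂).mp h₂.1
  field_simp [sub_ne_zero.mpr hx]
  linear_combination e₁ + e₂

lemma X_Y_of_some_add_self_eq_some {x y x₂ y₂ : F} {h : W.Nonsingular x y}
    {h₂ : W.Nonsingular x₂ y₂} (hsum : some x y h + some x y h = some x₂ y₂ h₂) :
    4 * y ^ 2 * x₂ = (x ^ 2 - W.a₄) ^ 2 - 8 * W.a₆ * x ∧
      2 * y * y₂ = -((3 * x ^ 2 + W.a₄) * (x₂ - x) + 2 * y ^ 2) := by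
  have hy := Y_ne_negY_of_some_add_self_eq_some hsum
  rw [add_self_of_Y_ne hy, some.injEq] at hsum
  obtain ⟨rfl, rfl⟩ := hsum
  have h2y : 2 * y ≠ 0 := by
    rw [negY_of_isShortNF] at hy
    contrapose! hy
    linear_combination hy
  have h2 : (2 : F) ≠ 0 := left_ne_zero_of_mul h2y
  have hy0 : y ≠ 0 := right_ne_zero_of_mul h2y
  have hslope : W.slope x x y y = (3 * x ^ 2 + W.a₄) / (2 * y) := by
    rw [slope_of_Y_ne rfl hy, negY_of_isShortNF, a₁_of_isShortNF, a₂_of_isShortNF]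
    ring
  have e := (equation_iff_of_isShortNF x y).mp h.1
  simp only [addY, negAddY, addX, negY_of_isShortNF, hslope, a₁_of_isShortNF, a₂_of_isShortNF]
  constructor
  · field_simp [h2, hy0]
    linear_combination -32 * x * e
  · field_simp [h2, hy0]

end Point

end WeierstrassCurve.Affine

open WeierstrassCurve.Affine

instance : Ecurve.IsShortNF := ⟨rfl, rfl, rfl⟩

lemma Ecurve_a₄ : Ecurve.a₄ = 1 := rfl

lemma Ecurve_a₆ : Ecurve.a₆ = 0 := rfl

lemma Ecurve_equation_iff (x y : ℂ) : Ecurve.Equation x y ↔ y ^ 2 = x ^ 3 + x := by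
  simp [equation_iff_of_isShortNF, Ecurve_a₄, Ecurve_a₆]

noncomputable def lattesMap (x : ℂ) : ℂ :=
  (3 + 4 * I) * x * (x ^ 2 + 1 + 2 * I) ^ 2 / (5 * x ^ 2 + 1 - 2 * I) ^ 2

lemma lattesMap_eq_neg_self {x : ℂ} (hx : x ^ 3 + x = 0) :
    5 * x ^ 2 + 1 - 2 * I ≠ 0 ∧ -x = lattesMap x := by
  have hden : 5 * x ^ 2 + 1 - 2 * I ≠ 0 := by grind [I_sq]
  refine ⟨hden, ?_⟩
  rw [lattesMap, eq_div_iff (pow_ne_zero 2 hden)]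
  grind [I_sq]

lemma lattesMap_eq_self {x : ℂ} (hx : 5 * x ^ 2 + 1 + 2 * I = 0) :
    5 * x ^ 2 + 1 - 2 * I ≠ 0 ∧ x = lattesMap x := by
  have hden : 5 * x ^ 2 + 1 - 2 * I ≠ 0 := by grind [I_sq]
  refine ⟨hden, ?_⟩
  rw [lattesMap, eq_div_iff (pow_ne_zero 2 hden)]
  grind [I_sq]

/-- The numerator of `x(2P - ιP)` once the denominator `16 y⁴` of the chord formula is cleared and
`4 y² x(2P) = (x² - 1)²`, `y² = x³ + x` are substituted. -/
lemma lattes_numerator_eq (x : ℂ) :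
    25 * (((x ^ 2 - 1) ^ 2 - 4 * x * (x ^ 3 + x)) * (4 * (x ^ 3 + x) - x * (x ^ 2 - 1) ^ 2) -
      4 * I * (x ^ 3 + x) * ((3 * x ^ 2 + 1) * ((x ^ 2 - 1) ^ 2 - 4 * x * (x ^ 3 + x)) +
        8 * (x ^ 3 + x) ^ 2)) =
      (3 + 4 * I) * x * (x ^ 2 + 1 + 2 * I) ^ 2 * (5 * x ^ 2 + 1 + 2 * I) ^ 2 := by
  grind [I_sq]

lemma eq_lattesMap_of_two_nsmul_eq_neg_iota {x y x' : ℂ} (hE : y ^ 2 = x ^ 3 + x) (hy : y ≠ 0)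
    (hx₂ : 4 * y ^ 2 * -x = (x ^ 2 - 1) ^ 2)
    (hy₂ : 2 * y * -(I * y) = -((3 * x ^ 2 + 1) * (-x - x) + 2 * y ^ 2))
    (hx' : 4 * (-(I * y)) ^ 2 * x' = ((-x) ^ 2 - 1) ^ 2) :
    5 * x ^ 2 + 1 - 2 * I ≠ 0 ∧ x' = lattesMap x := by
  have hx : x ≠ 0 := by grind
  have hx₀ : x * ((2 + I) * x ^ 2 + I) = 0 := by
    linear_combination (-hy₂ + (2 - 2 * I) * hE) / 2
  have hker : 5 * x ^ 2 + 1 + 2 * I = 0 := by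
    linear_combination (2 - I) * (mul_eq_zero.mp hx₀).resolve_left hx + (1 + x ^ 2) * I_sq
  obtain rfl : x' = x := by
    refine mul_left_cancel₀ (pow_ne_zero 2 hy) ?_
    linear_combination (hx₂ - hx') / 4 + y ^ 2 * x' * I_sq
  exact lattesMap_eq_self hker

lemma eq_lattesMap_of_X_ne {x y x₂ y₂ x' : ℂ} (hE : y ^ 2 = x ^ 3 + x) (hy : y ≠ 0)
    (hx₂ : 4 * y ^ 2 * x₂ = (x ^ 2 - 1) ^ 2)
    (hy₂ : 2 * y * y₂ = -((3 * x ^ 2 + 1) * (x₂ - x) + 2 * y ^ 2))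
    (hx' : x' * (x₂ + x) ^ 2 = (x₂ - x) * (1 - x * x₂) + 2 * I * y * y₂) (hne : x₂ + x ≠ 0) :
    5 * x ^ 2 + 1 - 2 * I ≠ 0 ∧ x' = lattesMap x := by
  have hQ : 4 * y ^ 2 * (x₂ + x) = 5 * x ^ 4 + 2 * x ^ 2 + 1 := by
    linear_combination hx₂ + 4 * x * hE
  have hfac : 5 * (5 * x ^ 4 + 2 * x ^ 2 + 1) =
      (5 * x ^ 2 + 1 - 2 * I) * (5 * x ^ 2 + 1 + 2 * I) := by
    linear_combination 4 * I_sq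
  have hprod : (5 * x ^ 2 + 1 - 2 * I) * (5 * x ^ 2 + 1 + 2 * I) ≠ 0 := by
    rw [← hfac, ← hQ]
    simp [hy, hne]
  obtain ⟨hminus, hplus⟩ := mul_ne_zero_iff.mp hprod
  have key : 25 * x' * (5 * x ^ 4 + 2 * x ^ 2 + 1) ^ 2 =
      (3 + 4 * I) * x * (x ^ 2 + 1 + 2 * I) ^ 2 * (5 * x ^ 2 + 1 + 2 * I) ^ 2 :=
    calc 25 * x' * (5 * x ^ 4 + 2 * x ^ 2 + 1) ^ 2
        = 25 * (16 * (y ^ 2) ^ 2 * (x' * (x₂ + x) ^ 2)) := by rw [← hQ]; ring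
      _ = 25 * ((4 * y ^ 2 * x₂ - 4 * x * y ^ 2) * (4 * y ^ 2 - x * (4 * y ^ 2 * x₂)) -
            4 * I * y ^ 2 * ((3 * x ^ 2 + 1) * (4 * y ^ 2 * x₂ - 4 * x * y ^ 2) +
              8 * (y ^ 2) ^ 2)) := by
        rw [hx']
        linear_combination 400 * I * y ^ 4 * hy₂
      _ = _ := by rw [hx₂, hE, lattes_numerator_eq]
  refine ⟨hminus, ?_⟩
  rw [lattesMap, eq_div_iff (pow_ne_zero 2 hminus)]
  refine mul_right_cancel₀ (pow_ne_zero 2 hplus) ?_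
  linear_combination key - x' * (5 * (5 * x ^ 4 + 2 * x ^ 2 + 1) +
    (5 * x ^ 2 + 1 - 2 * I) * (5 * x ^ 2 + 1 + 2 * I)) * hfac

lemma eq_lattesMap_of_two_nsmul_eq_some {x y x₂ y₂ x' y' : ℂ} {h : Ecurve.Nonsingular x y}
    {h₂ : Ecurve.Nonsingular x₂ y₂} {hS : Ecurve.Nonsingular (-x) (-(I * y))}
    {h' : Ecurve.Nonsingular x' y'} (h2P : Point.some x y h + Point.some x y h = Point.some x₂ y₂ h₂)
    (hP : Point.some x₂ y₂ h₂ + Point.some (-x) (-(I * y)) hS = Point.some x' y' h') :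
    5 * x ^ 2 + 1 - 2 * I ≠ 0 ∧ x' = lattesMap x := by
  have hE := (Ecurve_equation_iff x y).mp h.1
  have hy : y ≠ 0 := by
    have := Point.Y_ne_negY_of_some_add_self_eq_some h2P
    rw [negY_of_isShortNF] at this
    exact mt self_eq_neg.mpr this
  obtain ⟨hx₂, hy₂⟩ := Point.X_Y_of_some_add_self_eq_some h2P
  simp only [Ecurve_a₄, Ecurve_a₆, mul_zero, zero_mul, sub_zero] at hx₂ hy₂
  by_cases hx : x₂ = -x
  · subst hx
    obtain rfl := Point.Y_eq_of_some_add_some_eq_some hP rfl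
    obtain ⟨hx', -⟩ := Point.X_Y_of_some_add_self_eq_some hP
    simp only [Ecurve_a₄, Ecurve_a₆, mul_zero, zero_mul, sub_zero] at hx'
    exact eq_lattesMap_of_two_nsmul_eq_neg_iota hE hy hx₂ hy₂ hx'
  · have hx' := Point.X_of_some_add_some_eq_some hP hx
    simp only [Ecurve_a₄, Ecurve_a₆] at hx'
    exact eq_lattesMap_of_X_ne hE hy hx₂ hy₂ (by linear_combination hx')
      (fun h0 => hx (by linear_combination h0))

/-- The `x`-coordinate semiconjugates `[2−i] = 2·id − ι` to the Lattès map
`ψ(x) = (3+4i)x(x²+1+2i)²/(5x²+1−2i)²`. -/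
theorem lattes_map_of_two_sub_I {x y x' y' : ℂ}
    (h : Ecurve.Nonsingular x y) (h' : Ecurve.Nonsingular x' y')
    (hP : 2 • WeierstrassCurve.Affine.Point.some _ _ h - iotaE (.some _ _ h) = .some _ _ h') :
    5 * x ^ 2 + 1 - 2 * Complex.I ≠ 0 ∧
    x' = (3 + 4 * Complex.I) * x * (x ^ 2 + 1 + 2 * Complex.I) ^ 2 /
      (5 * x ^ 2 + 1 - 2 * Complex.I) ^ 2 := by
  rw [two_nsmul, iotaE, sub_eq_add_neg, Point.neg_some] at hP
  simp only [negY_of_isShortNF] at hP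
  show _ ∧ x' = lattesMap x
  rcases h2P : Point.some _ _ h + Point.some _ _ h with _ | ⟨x₂, y₂, h₂⟩
  · have hy := add_eq_zero_iff_eq_neg.mp h2P
    rw [Point.neg_some, Point.some.injEq, negY_of_isShortNF, self_eq_neg] at hy
    rw [h2P, ← Point.zero_def, zero_add, Point.some.injEq] at hP
    rw [← hP.1]
    refine lattesMap_eq_neg_self ?_
    rw [← (Ecurve_equation_iff x y).mp h.1, hy.2]
    ring
  · rw [h2P] at hP
    exact eq_lattesMap_of_two_nsmul_eq_some h2P hP
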